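/- For a corner point t = s ∈ {0,1}ⁿ of the hypercube with M_s invertible on its relevant block, the solution β̃_s of M_s u = X_sᵀ y satisfies: β̃_s restricted to indices i with s_i = 0 is zero, and on indices with s_i = 1 it coincides with the least-squares solution using only those columns of X; in particular X_s β̃_s = X_{[s]} β̂_{[s]}, so the objective ‖y - X_t β̃_t‖² at t = s equals the exact subset-selection objective ‖y - X_{[s]} β̂_{[s]}‖². -/
import Mathlib


open Matrix
open scoped Classical

/-- At a corner point `t = s ∈ {0,1}ⁿ`, a solution `β̃` of `M_s u = X_sᵀ y` vanishes on
indices outside the support of `s`, coincides with the OLS solution `β̂_{[s]}` on the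
selected columns, satisfies `X_s β̃ = X_{[s]} β̂_{[s]}`, and yields the exact
subset-selection objective `‖y - X_{[s]} β̂_{[s]}‖²`. -/
theorem corner_point_objective (n : ℕ)
    (X : Matrix (Fin n) (Fin n) ℝ)
    (hX : ∀ i j, X i j = if (j : ℕ) ≤ (i : ℕ) then 1 else 0)
    (s : Fin n → ℝ) (hs01 : ∀ i, s i = 0 ∨ s i = 1)
    (y βt : Fin n → ℝ)
    (hsol : ((X * Matrix.diagonal s)ᵀ * (X * Matrix.diagonal s)
        + (n : ℝ) • (1 - Matrix.diagonal fun i => s i * s i)).mulVec βt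
      = (X * Matrix.diagonal s)ᵀ.mulVec y) :
    let Xs : Matrix (Fin n) {j : Fin n // s j = 1} ℝ := Matrix.of fun i j => X i j.val
    let βhat : {j : Fin n // s j = 1} → ℝ := (Xsᵀ * Xs)⁻¹.mulVec (Xsᵀ.mulVec y)
    IsUnit (Xsᵀ * Xs).det →
      ((∀ i : Fin n, s i = 0 → βt i = 0)
        ∧ (∀ j : {j : Fin n // s j = 1}, βt j.val = βhat j)
        ∧ (X * Matrix.diagonal s).mulVec βt = Xs.mulVec βhat
        ∧ ∑ i, (y i - (X * Matrix.diagonal s).mulVec βt i) ^ 2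
            = ∑ i, (y i - Xs.mulVec βhat i) ^ 2) := by
  intro Xs βhat hdet
  have hg : Matrix.diagonal s *ᵥ βt = fun j => s j * βt j :=
    funext fun j => Matrix.mulVec_diagonal s βt j
  have hsol' : ∀ i, s i * (Xᵀ.mulVec (X.mulVec fun j => s j * βt j)) i
      + (n:ℝ) * (βt i - s i * (s i * βt i)) = s i * (Xᵀ.mulVec y) i := by
    intro i
    have h := congrFun hsol i
    simp only [Matrix.add_mulVec, Matrix.smul_mulVec, Matrix.sub_mulVec, Matrix.one_mulVec,
      Matrix.transpose_mul, Matrix.diagonal_transpose, ← Matrix.mulVec_mulVec,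
      hg, Matrix.mulVec_diagonal, Pi.add_apply, Pi.smul_apply, Pi.sub_apply, smul_eq_mul] at h
    linarith [h]
  -- Part 1
  have hz : ∀ i, s i = 0 → βt i = 0 := by
    intro i hi
    have hn : (0:ℝ) < n := by
      exact_mod_cast i.pos
    have h := hsol' i
    rw [hi] at h
    simp only [zero_mul, mul_zero, sub_zero, zero_add] at h
    have := mul_eq_zero.mp h
    rcases this with h'|h'
    · exact absurd h' (ne_of_gt hn)
    · exact h'
  have hg2 : (fun j => s j * βt j) = βt := by
    funext j
    rcases hs01 j with h|h
    · rw [h, zero_mul, hz j h]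
    · rw [h, one_mul]
  -- normal equations on selected indices
  have heq : ∀ i, s i = 1 → (Xᵀ.mulVec (X.mulVec βt)) i = (Xᵀ.mulVec y) i := by
    intro i hi
    have h := hsol' i
    rw [hg2, hi] at h
    simp only [one_mul] at h
    linarith [h]
  set βres : {j : Fin n // s j = 1} → ℝ := fun j => βt j.val with hβres
  have hsum : ∀ f : Fin n → ℝ,
      ∑ j : {j : Fin n // s j = 1}, f j.val * βt j.val = ∑ j, f j * βt j := by
    intro f
    rw [← Finset.sum_subtype (Finset.univ.filter fun j => s j = 1) (by simp)
      (fun j => f j * βt j)]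
    apply Finset.sum_subset (Finset.filter_subset _ _)
    intro x _ hx
    simp only [Finset.mem_filter, Finset.mem_univ, true_and] at hx
    rcases hs01 x with h|h
    · rw [hz x h, mul_zero]
    · exact absurd h hx
  have hXsv : Xs.mulVec βres = X.mulVec βt := by
    funext i
    simpa [Matrix.mulVec, dotProduct, Xs] using hsum (fun j => X i j)
  have hnorm : (Xsᵀ * Xs).mulVec βres = Xsᵀ.mulVec y := by
    rw [← Matrix.mulVec_mulVec, hXsv]
    funext j
    have h1 : (Xsᵀ.mulVec (X.mulVec βt)) j = (Xᵀ.mulVec (X.mulVec βt)) j.val := by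
      simp [Matrix.mulVec, dotProduct, Matrix.transpose_apply, Xs]
    have h2 : (Xsᵀ.mulVec y) j = (Xᵀ.mulVec y) j.val := by
      simp [Matrix.mulVec, dotProduct, Matrix.transpose_apply, Xs]
    rw [h1, h2, heq j.val j.prop]
  have hres : βres = βhat := by
    have : βhat = (Xsᵀ * Xs)⁻¹.mulVec ((Xsᵀ * Xs).mulVec βres) := by
      rw [hnorm]
    rw [this, Matrix.mulVec_mulVec, Matrix.nonsing_inv_mul _ hdet, Matrix.one_mulVec]
  have part3 : (X * Matrix.diagonal s).mulVec βt = Xs.mulVec βhat := by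
    rw [← Matrix.mulVec_mulVec, hg, hg2, ← hXsv, hres]
  refine ⟨hz, fun j => by rw [← hres], part3, ?_⟩
  rw [part3]
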